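/- For all s ≥ 1, t ≥ 0, i ≥ 0 and every integer m (with y invertible), Σ_{j=0}^{i} (−1)^{(sj+2(s+1))(j+1)/2} · C(t+1,j)_{F_s(x,y)} · F_{ts(i−j)+m}(x,y) · y^{sj(j−1)/2} = (−1)^{s+i+1+si(i+1)/2} · C(t,i)_{F_s(x,y)} · F_{m−is}(x,y) · y^{si(i+1)/2}, where C(t,i)_{F_s} = 0 when i > t. -/

import Mathlib

/-- Bivariate Fibonacci polynomials. -/
def bF {K : Type*} [Field K] (x y : K) : ℕ → K
  | 0 => 0
  | 1 => 1
  | n + 2 => x * bF x y (n + 1) + y * bF x y n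

/-- Bivariate Fibonacci polynomials extended to all integer indices. -/
noncomputable def zF {K : Type*} [Field K] (x y : K) (n : ℤ) : K :=
  if 0 ≤ n then bF x y n.toNat else -((-y) ^ n) * bF x y (-n).toNat

/-- The bivariate s-Fibopolynomial (equal to 0 when k > n, since F_0 = 0
appears in the numerator). -/
noncomputable def fibo {K : Type*} [Field K] (x y : K) (s n k : ℕ) : K :=
  (∏ i ∈ Finset.range k, bF x y (s * (n - i))) / ∏ i ∈ Finset.range k, bF x y (s * (i + 1))

/-- The field ℚ(x,y) of rational functions in two variables. -/
noncomputable abbrev RF2 : Type := FractionRing (MvPolynomial (Fin 2) ℚ)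

noncomputable def Xv : RF2 := algebraMap (MvPolynomial (Fin 2) ℚ) RF2 (MvPolynomial.X 0)
noncomputable def Yv : RF2 := algebraMap (MvPolynomial (Fin 2) ℚ) RF2 (MvPolynomial.X 1)

/-!
Induction on `i`, for all `m` at once. Replacing `m` by `m + ts` turns the first `i + 1` terms of
the sum for `i + 1` into the sum for `i`, so the inductive step compares just two terms with the
right-hand side. After multiplying by `F_{s(i+1)}` and using the two Pascal-type recurrences
`C(t+1,i+1) F_{s(i+1)} = C(t,i) F_{s(t+1)}` and `C(t,i+1) F_{s(i+1)} = C(t,i) F_{s(t-i)}`, this is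
d'Ocagne's identity `F_a F_{m+b} - F_{a+b} F_m = -(-y)^a F_b F_{m-a}` with `a = s(i+1)`,
`b = s(t-i)`. Both d'Ocagne's identity and the addition formula behind it hold because, for
`y ≠ 0`, a two-sided sequence satisfying `f(n+2) = x f(n+1) + y f(n)` is determined by `f 0` and
`f 1`.
In `ℚ(x,y)` the denominators `F_{sj}` do not vanish, since `x = y = 1` specializes `F_n` to the
Fibonacci number `fib n`.
-/

open Finset

section Recurrence

variable {K : Type*} [Field K] (x y : K)

def IsFibonacciLike (f : ℤ → K) : Prop := ∀ n, f (n + 2) = x * f (n + 1) + y * f n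

variable {x y} in
theorem IsFibonacciLike.ext {f g : ℤ → K} (hy : y ≠ 0) (hf : IsFibonacciLike x y f)
    (hg : IsFibonacciLike x y g) (h0 : f 0 = g 0) (h1 : f 1 = g 1) : f = g := by
  suffices key : ∀ n, f n = g n ∧ f (n + 1) = g (n + 1) from funext fun n => (key n).1
  intro n
  induction n using Int.induction_on with
  | zero => exact ⟨h0, by simpa using h1⟩
  | succ k ih => exact ⟨ih.2, by rw [add_assoc, one_add_one_eq_two, hf, hg, ih.1, ih.2]⟩
  | pred k ih =>
    refine ⟨?_, by rw [sub_add_cancel]; exact ih.1⟩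
    have hf' := hf (-k - 1)
    have hg' := hg (-k - 1)
    rw [show -(k : ℤ) - 1 + 2 = -k + 1 by ring, sub_add_cancel] at hf' hg'
    apply mul_left_cancel₀ hy
    linear_combination hg' - hf' + ih.2 - x * ih.1

@[simp]
theorem zF_natCast (n : ℕ) : zF x y n = bF x y n := by simp [zF]

@[simp]
theorem zF_zero : zF x y 0 = 0 := zF_natCast x y 0

@[simp]
theorem zF_one : zF x y 1 = 1 := zF_natCast x y 1

@[simp]
theorem zF_neg_one : zF x y (-1) = y⁻¹ := by simp [zF, bF]

theorem zF_neg_natCast (n : ℕ) : zF x y (-n) = -(-y) ^ (-n : ℤ) * bF x y n := by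
  rcases n with _ | n
  · simp [bF]
  · rw [zF, if_neg (by omega)]
    simp

theorem isFibonacciLike_zF (hy : y ≠ 0) : IsFibonacciLike x y (zF x y) := by
  intro n
  rcases lt_trichotomy n (-1) with h | rfl | h
  · obtain ⟨k, rfl⟩ : ∃ k : ℕ, n = -(k + 2 : ℕ) := ⟨(-n - 2).toNat, by omega⟩
    rw [show -((k + 2 : ℕ) : ℤ) + 2 = -(k : ℕ) by push_cast; ring,
      show -((k + 2 : ℕ) : ℤ) + 1 = -(k + 1 : ℕ) by push_cast; ring,
      zF_neg_natCast, zF_neg_natCast, zF_neg_natCast, bF]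
    obtain ⟨w, rfl⟩ : ∃ w, y = -w := ⟨-y, by ring⟩
    have hw : w ≠ 0 := neg_ne_zero.mp hy
    simp only [neg_neg, zpow_neg, zpow_natCast]
    field_simp
    ring
  · norm_num [hy]
  · lift n to ℕ using (by omega : 0 ≤ n)
    exact_mod_cast (rfl : bF x y (n + 2) = _)

theorem zF_add (hy : y ≠ 0) (m n : ℤ) :
    zF x y (m + n) = zF x y (m + 1) * zF x y n + y * zF x y m * zF x y (n - 1) := by
  have hF := isFibonacciLike_zF x y hy
  refine congrFun (IsFibonacciLike.ext (x := x) (f := fun n => zF x y (m + n))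
    (g := fun n => zF x y (m + 1) * zF x y n + y * zF x y m * zF x y (n - 1)) hy ?_ ?_ ?_ ?_) n
  · intro n
    linear_combination (norm := ring_nf) hF (m + n)
  · intro n
    linear_combination (norm := ring_nf) zF x y (m + 1) * hF n + y * zF x y m * hF (n - 1)
  · simp
    field_simp
  · simp

theorem zF_dOcagne (hy : y ≠ 0) (a b m : ℤ) :
    zF x y a * zF x y (m + b) - zF x y (a + b) * zF x y m =
      -(-y) ^ a * zF x y b * zF x y (m - a) := by
  have hF := isFibonacciLike_zF x y hy
  refine congrFun (IsFibonacciLike.ext (x := x)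
    (f := fun a => zF x y a * zF x y (m + b) - zF x y (a + b) * zF x y m)
    (g := fun a => -(-y) ^ a * zF x y b * zF x y (m - a)) hy ?_ ?_ ?_ ?_) a
  · intro a
    linear_combination (norm := ring_nf) zF x y (m + b) * hF a - zF x y m * hF (a + b)
  · intro a
    have : (-y) ^ (a + 2) = (-y) ^ a * y ^ 2 := by rw [zpow_add₀ (neg_ne_zero.mpr hy)]; simp
    have h1 : (-y) ^ (a + 1) = (-y) ^ a * (-y) := zpow_add_one₀ (neg_ne_zero.mpr hy) a
    simp only [this, h1]
    linear_combination (norm := ring_nf) y * (-y) ^ a * zF x y b * hF (m - a - 2)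
  · simp
  · simp only [zF_one, one_mul, zpow_one, neg_neg, add_comm 1 b]
    linear_combination (norm := ring_nf) zF_add x y hy b m

end Recurrence

section Fibopolynomial

variable {K : Type*} [Field K] {x y : K} {s : ℕ}

@[simp]
theorem fibo_zero_right (n : ℕ) : fibo x y s n 0 = 1 := by simp [fibo]

theorem fibo_eq_zero_of_lt {n k : ℕ} (h : n < k) : fibo x y s n k = 0 := by
  rw [fibo, prod_eq_zero (mem_range.mpr h) (by simp [bF]), zero_div]

theorem fibo_succ_right_eq (hF : ∀ j, bF x y (s * (j + 1)) ≠ 0) (n k : ℕ) :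
    fibo x y s n (k + 1) * bF x y (s * (k + 1)) = fibo x y s n k * bF x y (s * (n - k)) := by
  have := prod_ne_zero_iff.mpr fun j (_ : j ∈ range k) => hF j
  simp only [fibo, prod_range_succ]
  field_simp [hF k]

theorem fibo_succ_succ_eq (hF : ∀ j, bF x y (s * (j + 1)) ≠ 0) (n k : ℕ) :
    fibo x y s (n + 1) (k + 1) * bF x y (s * (k + 1)) = fibo x y s n k * bF x y (s * (n + 1)) := by
  have := prod_ne_zero_iff.mpr fun j (_ : j ∈ range k) => hF j
  rw [fibo, fibo, prod_range_succ' (fun j => bF x y (s * (n + 1 - j))), prod_range_succ]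
  simp only [Nat.add_sub_add_right, Nat.sub_zero]
  field_simp [hF k]

end Fibopolynomial

theorem sign_exponent_eq (s j : ℕ) :
    (s * j + 2 * (s + 1)) * (j + 1) / 2 = s * j * (j + 1) / 2 + (s + 1) * (j + 1) := by
  rw [show (s * j + 2 * (s + 1)) * (j + 1) = s * j * (j + 1) + 2 * ((s + 1) * (j + 1)) by ring,
    Nat.add_mul_div_left _ _ two_pos]

theorem mul_succ_mul_succ_succ_div_two (s i : ℕ) :
    s * (i + 1) * (i + 1 + 1) / 2 = s * i * (i + 1) / 2 + s * (i + 1) := by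
  rw [show s * (i + 1) * (i + 1 + 1) = s * i * (i + 1) + 2 * (s * (i + 1)) by ring,
    Nat.add_mul_div_left _ _ two_pos]

theorem fibo_dOcagne {K : Type*} [Field K] {x y : K} {s t i : ℕ} (hy : y ≠ 0)
    (hF : ∀ j, bF x y (s * (j + 1)) ≠ 0) (hit : i ≤ t) (m : ℤ) :
    fibo x y s t i * zF x y (m + (s * (t - i) : ℕ)) - fibo x y s (t + 1) (i + 1) * zF x y m =
      -(-y) ^ (s * (i + 1)) * fibo x y s t (i + 1) * zF x y (m - (s * (i + 1) : ℕ)) := by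
  have hdoc := zF_dOcagne x y hy (s * (i + 1) : ℕ) (s * (t - i) : ℕ) m
  rw [← Nat.cast_add, ← Nat.mul_add, show i + 1 + (t - i) = t + 1 by omega,
    zpow_natCast] at hdoc
  simp only [zF_natCast] at hdoc
  apply mul_right_cancel₀ (hF i)
  linear_combination fibo x y s t i * hdoc - zF x y m * fibo_succ_succ_eq hF t i +
    (-y) ^ (s * (i + 1)) * zF x y (m - (s * (i + 1) : ℕ)) * fibo_succ_right_eq hF t i

theorem fibo_alternating_sum {K : Type*} [Field K] {x y : K} {s : ℕ} (hy : y ≠ 0)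
    (hF : ∀ j, bF x y (s * (j + 1)) ≠ 0) (t i : ℕ) (m : ℤ) :
    (∑ j ∈ range (i + 1),
        (-1 : K) ^ (((s * j + 2 * (s + 1)) * (j + 1)) / 2) * fibo x y s (t + 1) j *
          zF x y ((t * s * (i - j) : ℕ) + m) * y ^ ((s * j * (j - 1)) / 2)) =
      (-1 : K) ^ (s + i + 1 + (s * i * (i + 1)) / 2) *
        fibo x y s t i * zF x y (m - (i * s : ℕ)) * y ^ ((s * i * (i + 1)) / 2) := by
  induction i generalizing m with
  | zero => simp [show 2 * (s + 1) / 2 = s + 1 by omega]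
  | succ i ih =>
    have shift : ∀ j ∈ range (i + 1),
        ((t * s * (i + 1 - j) : ℕ) : ℤ) + m =
          ((t * s * (i - j) : ℕ) : ℤ) + ((t * s : ℕ) + m) := by
      intro j hj
      rw [Nat.sub_add_comm (mem_range_succ_iff.mp hj)]
      push_cast
      ring
    rw [sum_range_succ, sum_congr rfl fun j hj => by rw [shift j hj], ih, sign_exponent_eq,
      mul_succ_mul_succ_succ_div_two]
    simp only [Nat.sub_self, mul_zero, Nat.cast_zero, zero_add, Nat.add_sub_cancel]
    rcases le_or_gt i t with hit | hti
    · set T := s * i * (i + 1) / 2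
      have hsign : (-1 : K) ^ (T + s * (i + 1) + (s + 1) * (i + 1 + 1)) =
          -(-1) ^ (s + i + 1 + T) := by
        rw [show T + s * (i + 1) + (s + 1) * (i + 1 + 1) = s + i + 1 + T + 1 + 2 * (s * i + s) by
          ring, pow_add, pow_add, pow_mul]
        simp
      have hsign' : (-1 : K) ^ (s + (i + 1) + 1 + (T + s * (i + 1))) =
          -((-1) ^ (s + i + 1 + T) * (-1) ^ (s * (i + 1))) := by
        rw [show s + (i + 1) + 1 + (T + s * (i + 1)) = s + i + 1 + T + 1 + s * (i + 1) by ring,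
          pow_add, pow_add]
        simp
      have key := fibo_dOcagne hy hF hit m
      rw [neg_pow y] at key
      have hidx : ((t * s : ℕ) : ℤ) + m - (i * s : ℕ) = m + (s * (t - i) : ℕ) := by
        push_cast [hit]
        ring
      rw [hsign, hsign', mul_right_comm s (i + 1) i, mul_comm (i + 1) s, hidx]
      linear_combination (-1 : K) ^ (s + i + 1 + T) * y ^ T * key
    · simp [fibo_eq_zero_of_lt hti, fibo_eq_zero_of_lt (Nat.succ_lt_succ hti),
        fibo_eq_zero_of_lt (hti.trans (Nat.lt_succ_self i))]

theorem bF_one_one {K : Type*} [Field K] (n : ℕ) : bF (1 : K) 1 n = Nat.fib n := by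
  induction n using Nat.twoStepInduction with
  | zero => simp [bF]
  | one => simp [bF]
  | more n ih₁ ih₂ => simp [bF, ih₁, ih₂, Nat.fib_add_two, add_comm]

open MvPolynomial in
noncomputable def fibPoly : ℕ → MvPolynomial (Fin 2) ℚ
  | 0 => 0
  | 1 => 1
  | n + 2 => X 0 * fibPoly (n + 1) + X 1 * fibPoly n

open MvPolynomial in
theorem map_fibPoly {L : Type*} [Field L] (φ : MvPolynomial (Fin 2) ℚ →+* L) (n : ℕ) :
    φ (fibPoly n) = bF (φ (X 0)) (φ (X 1)) n := by
  induction n using Nat.twoStepInduction with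
  | zero => simp [fibPoly, bF]
  | one => simp [fibPoly, bF]
  | more n ih₁ ih₂ => simp [fibPoly, bF, ih₁, ih₂]

theorem Yv_ne_zero : Yv ≠ 0 :=
  (map_ne_zero_iff _ (IsFractionRing.injective _ RF2)).mpr (MvPolynomial.X_ne_zero 1)

theorem bF_Xv_Yv_ne_zero {n : ℕ} (hn : n ≠ 0) : bF Xv Yv n ≠ 0 := by
  have hpoly : fibPoly n ≠ 0 := fun h => by
    simpa [h, bF_one_one, hn, eq_comm] using map_fibPoly (MvPolynomial.eval fun _ => (1 : ℚ)) n
  rw [Xv, Yv, ← map_fibPoly]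
  exact (map_ne_zero_iff _ (IsFractionRing.injective _ RF2)).mpr hpoly

/-- Σ_{j=0}^{i} (−1)^{(sj+2(s+1))(j+1)/2} C(t+1,j)_{F_s} F_{ts(i−j)+m} y^{sj(j−1)/2}
  = (−1)^{s+i+1+si(i+1)/2} C(t,i)_{F_s} F_{m−is} y^{si(i+1)/2}. -/
theorem fibopolynomial_fib_alternating_sum (s t i : ℕ) (m : ℤ) (hs : 1 ≤ s) :
    (∑ j ∈ Finset.range (i + 1),
        (-1 : RF2) ^ (((s * j + 2 * (s + 1)) * (j + 1)) / 2) *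
          fibo Xv Yv s (t + 1) j *
            zF Xv Yv ((t * s * (i - j) : ℕ) + m) * Yv ^ ((s * j * (j - 1)) / 2)) =
      (-1 : RF2) ^ (s + i + 1 + (s * i * (i + 1)) / 2) *
        fibo Xv Yv s t i * zF Xv Yv (m - (i * s : ℕ)) * Yv ^ ((s * i * (i + 1)) / 2) :=
  fibo_alternating_sum Yv_ne_zero (fun j => bF_Xv_Yv_ne_zero (Nat.mul_pos hs j.succ_pos).ne') t i m
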